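/- arXiv:2205.06030 — 2 statements merged into one kernel-verified Lean document; each statement's English description precedes it below -/
import Mathlib

section
/- (Order–degree–height surface for common left multiples, differential case.) For ℓ = 1, …, n let L_ℓ = Σ_{i=0}^{r_ℓ} (a_{ℓ,i}·)∘D_x^i with a_{ℓ,i} ∈ C[x,y] not all zero, deg_x a_{ℓ,i} ≤ d_ℓ and deg_y a_{ℓ,i} ≤ h_ℓ for all i. Let r, d, h ∈ ℕ be such that r ≥ r_ℓ, d ≥ d_ℓ, h ≥ h_ℓ for all ℓ and (r+1)(d+1)(h+1) − (r+1)(d+1)·Σ_ℓ h_ℓ − (r+1)(h+1)·Σ_ℓ d_ℓ − (d+1)(h+1)·Σ_ℓ r_ℓ + (r+1)·Σ_ℓ d_ℓ h_ℓ + (d+1)·Σ_ℓ r_ℓ h_ℓ + (h+1)·Σ_ℓ r_ℓ d_ℓ − Σ_ℓ r_ℓ d_ℓ h_ℓ > 0. Then there exist c_0, …, c_r ∈ C[x,y], not all zero, with deg_x c_i ≤ d and deg_y c_i ≤ h, and for each ℓ polynomials m_{ℓ,0}, …, m_{ℓ,r−r_ℓ} ∈ C[x,y] with deg_x m_{ℓ,j}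 ≤ d − d_ℓ and deg_y m_{ℓ,j} ≤ h − h_ℓ, such that for every ℓ the identity Σ_{i=0}^{r} (c_i·)∘D_x^i = (Σ_{j=0}^{r−r_ℓ} (m_{ℓ,j}·)∘D_x^j) ∘ L_ℓ holds as C-linear endomorphisms of C[x,y]; in particular L_1, …, L_n have a nonzero common left multiple of order at most r, degree at most d, and height at most h. -/
open MvPolynomial

namespace CLMaux

open Finsupp

variable {C : Type*} [Field C] [CharZero C]

local notation "P" => MvPolynomial (Fin 2) C

lemma degreeOf_pderiv_le (n m : Fin 2) (p : P) :
    degreeOf n (pderiv m p) ≤ degreeOf n p := by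
  classical
  rw [degreeOf_le_iff]
  intro e he
  conv at he => rw [p.as_sum, map_sum]
  obtain ⟨u, hu, he'⟩ := Finset.mem_biUnion.mp (MvPolynomial.support_sum he)
  rw [pderiv_monomial] at he'
  have hsing := support_monomial_subset he'
  simp only [Finset.mem_singleton] at hsing
  subst hsing
  refine le_trans ?_ (monomial_le_degreeOf n hu)
  rw [Finsupp.tsub_apply]
  exact Nat.sub_le _ _

lemma degreeOf_pow_pderiv_le (n m : Fin 2) (k : ℕ) (p : P) :
    degreeOf n ((((pderiv m).toLinearMap : Module.End C P) ^ k) p) ≤ degreeOf n p := by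
  induction k with
  | zero => rw [pow_zero]; exact le_of_eq rfl
  | succ k ih =>
      rw [pow_succ', Module.End.mul_apply]
      exact le_trans (by exact (degreeOf_pderiv_le n m _).trans (le_refl _) |>.trans ih) (le_refl _)

lemma fin2_finsupp_eq (e : Fin 2 →₀ ℕ) :
    e = Finsupp.single 0 (e 0) + Finsupp.single 1 (e 1) := by
  ext a
  fin_cases a <;> simp [Finsupp.single_apply]

lemma poly_as_sum {D H : ℕ} (p : P) (hd : degreeOf 0 p ≤ D) (hh : degreeOf 1 p ≤ H) :
    ∑ t : Fin (D+1) × Fin (H+1),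
      monomial (Finsupp.single (0 : Fin 2) (t.1 : ℕ) + Finsupp.single 1 (t.2 : ℕ))
        (coeff (Finsupp.single (0 : Fin 2) (t.1 : ℕ) + Finsupp.single 1 (t.2 : ℕ)) p) = p := by
  classical
  apply MvPolynomial.ext
  intro e
  rw [MvPolynomial.coeff_sum]
  simp only [coeff_monomial]
  by_cases hin : e 0 ≤ D ∧ e 1 ≤ H
  · rw [Finset.sum_eq_single (⟨⟨e 0, Nat.lt_succ_of_le hin.1⟩, ⟨e 1, Nat.lt_succ_of_le hin.2⟩⟩ :
        Fin (D+1) × Fin (H+1))]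
    · rw [if_pos]
      · simp only [Fin.val_mk]
        exact congrArg (fun u => coeff u p) (fin2_finsupp_eq e).symm
      · simp only [Fin.val_mk]
        exact (fin2_finsupp_eq e).symm
    · intro t _ hne
      rw [if_neg]
      intro hEq
      apply hne
      have h0 := DFunLike.congr_fun hEq 0
      have h1 := DFunLike.congr_fun hEq 1
      simp only [Finsupp.add_apply, Finsupp.single_apply] at h0 h1
      norm_num at h0 h1
      ext
      · simp [h0]
      · simp [h1]
    · intro habs; exact absurd (Finset.mem_univ _) habs
  · rw [Finset.sum_eq_zero, eq_comm]
    · by_contra hc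
      have hmem : e ∈ p.support := by rwa [MvPolynomial.mem_support_iff]
      exact hin ⟨(monomial_le_degreeOf 0 hmem).trans hd, (monomial_le_degreeOf 1 hmem).trans hh⟩
    · intro t _
      rw [if_neg]
      intro hEq
      apply hin
      have h0 := DFunLike.congr_fun hEq 0
      have h1 := DFunLike.congr_fun hEq 1
      simp only [Finsupp.add_apply, Finsupp.single_apply] at h0 h1
      norm_num at h0 h1
      have ht1 := t.1.isLt
      have ht2 := t.2.isLt
      omega


noncomputable def ee (j m : ℕ) : Fin 2 →₀ ℕ := Finsupp.single 0 j + Finsupp.single 1 m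

lemma ee_apply0 (j m : ℕ) : ee j m 0 = j := by simp [ee, Finsupp.single_apply]

lemma ee_apply1 (j m : ℕ) : ee j m 1 = m := by simp [ee, Finsupp.single_apply]

lemma ee_inj {j m j' m' : ℕ} (h : ee j m = ee j' m') : j = j' ∧ m = m' := by
  constructor
  · have h0 := DFunLike.congr_fun h 0
    rwa [ee_apply0, ee_apply0] at h0
  · have h1 := DFunLike.congr_fun h 1
    rwa [ee_apply1, ee_apply1] at h1


lemma degreeOf_monomial_le (n : Fin 2) (e : Fin 2 →₀ ℕ) (a : C) :
    degreeOf n (monomial e a : P) ≤ e n := by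
  refine degreeOf_le_iff.mpr fun m hm => ?_
  have := support_monomial_subset hm
  simp only [Finset.mem_singleton] at this
  subst this
  exact le_refl _


lemma poly_as_sum' {D H : ℕ} (p : P) (hd : degreeOf 0 p ≤ D) (hh : degreeOf 1 p ≤ H) :
    ∑ t : Fin (D+1) × Fin (H+1),
      monomial (ee (t.1 : ℕ) (t.2 : ℕ)) (coeff (ee (t.1 : ℕ) (t.2 : ℕ)) p) = p := by
  have := poly_as_sum (C := C) (D := D) (H := H) p hd hh
  simpa only [ee] using this

noncomputable def Phi (S D H : ℕ) :
    ((Fin (S+1) × Fin (D+1) × Fin (H+1)) → C) →ₗ[C] (ℕ → MvPolynomial (Fin 2) C) where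
  toFun f k := ∑ t : Fin (S+1) × Fin (D+1) × Fin (H+1),
    if (t.1 : ℕ) = k then monomial (ee (t.2.1 : ℕ) (t.2.2 : ℕ)) (f t) else 0
  map_add' f g := by
    funext k
    simp only [Pi.add_apply, ← Finset.sum_add_distrib]
    refine Finset.sum_congr rfl fun t _ => ?_
    split
    · exact map_add _ _ _
    · rw [add_zero]
  map_smul' c f := by
    funext k
    simp only [RingHom.id_apply, Pi.smul_apply, Finset.smul_sum]
    refine Finset.sum_congr rfl fun t _ => ?_
    split
    · exact map_smul (monomial _) c (f t)
    · rw [smul_zero]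

lemma coeff_ee_Phi {S D H : ℕ} (f : (Fin (S+1) × Fin (D+1) × Fin (H+1)) → C)
    (t : Fin (S+1) × Fin (D+1) × Fin (H+1)) :
    coeff (ee (t.2.1 : ℕ) (t.2.2 : ℕ)) (Phi S D H f (t.1 : ℕ)) = f t := by
  classical
  show coeff _ (∑ t' : Fin (S+1) × Fin (D+1) × Fin (H+1), _) = _
  rw [MvPolynomial.coeff_sum, Finset.sum_eq_single t]
  · rw [if_pos rfl, coeff_monomial, if_pos rfl]
  · intro t' _ hne
    split
    · rename_i hval
      rw [coeff_monomial]
      refine if_neg fun hEq => hne ?_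
      obtain ⟨h1, h2⟩ := ee_inj hEq
      ext
      · exact hval
      · exact h1
      · exact h2
    · rw [coeff_zero]
  · intro habs; exact absurd (Finset.mem_univ _) habs

lemma Phi_injective (S D H : ℕ) : Function.Injective (Phi (C := C) S D H) := by
  rw [injective_iff_map_eq_zero]
  intro f hf
  funext t
  have := coeff_ee_Phi f t
  rw [hf] at this
  simpa using this.symm

lemma mem_range_Phi {S D H : ℕ} (c : ℕ → MvPolynomial (Fin 2) C) :
    (∃ f, Phi S D H f = c) ↔
      (∀ k, S < k → c k = 0) ∧
      (∀ k, degreeOf 0 (c k) ≤ D ∧ degreeOf 1 (c k) ≤ H) := by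
  classical
  constructor
  · rintro ⟨f, rfl⟩
    constructor
    · intro k hk
      refine Finset.sum_eq_zero fun t _ => if_neg ?_
      have := t.1.isLt
      omega
    · intro k
      constructor
      · refine le_trans (degreeOf_sum_le _ _ _) (Finset.sup_le fun t _ => ?_)
        split
        · exact le_trans (degreeOf_monomial_le _ _ _) (by rw [ee_apply0]; exact Nat.lt_succ_iff.mp t.2.1.isLt)
        · simp
      · refine le_trans (degreeOf_sum_le _ _ _) (Finset.sup_le fun t _ => ?_)
        split
        · exact le_trans (degreeOf_monomial_le _ _ _) (by rw [ee_apply1]; exact Nat.lt_succ_iff.mp t.2.2.isLt)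
        · simp
  · rintro ⟨h0, hdh⟩
    refine ⟨fun t => coeff (ee (t.2.1 : ℕ) (t.2.2 : ℕ)) (c (t.1 : ℕ)), ?_⟩
    funext k
    show (∑ t : Fin (S+1) × Fin (D+1) × Fin (H+1), _) = c k
    by_cases hk : k ≤ S
    · have hkS : k < S + 1 := by omega
      rw [Fintype.sum_prod_type]
      rw [Finset.sum_eq_single (⟨k, hkS⟩ : Fin (S+1))]
      · simp only [Fin.val_mk, if_pos]
        exact poly_as_sum' (c k) (hdh k).1 (hdh k).2
      · intro i _ hne
        refine Finset.sum_eq_zero fun p _ => if_neg fun hEq => hne (Fin.ext (by simpa using hEq))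
      · intro habs; exact absurd (Finset.mem_univ _) habs
    · rw [Finset.sum_eq_zero, eq_comm]
      · exact h0 k (by omega)
      · refine fun t _ => if_neg ?_
        have := t.1.isLt
        omega

noncomputable abbrev DxE (C : Type*) [Field C] : Module.End C (MvPolynomial (Fin 2) C) :=
  (pderiv (0 : Fin 2)).toLinearMap

lemma pow_pderiv_mul (n : ℕ) (p q : P) :
    (DxE C ^ n) (p * q)
      = ∑ k ∈ Finset.range (n+1), n.choose k • ((DxE C ^ (n-k)) p * (DxE C ^ k) q) := by
  induction n with
  | zero => simp
  | succ n IH =>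
    calc (DxE C ^ (n+1)) (p * q) = DxE C ((DxE C ^ n) (p * q)) := by
          rw [pow_succ', Module.End.mul_apply]
      _ = DxE C (∑ k ∈ Finset.range (n+1), n.choose k • ((DxE C ^ (n-k)) p * (DxE C ^ k) q)) := by
          rw [IH]
      _ = ∑ k ∈ Finset.range (n+1), n.choose k • (DxE C ((DxE C ^ (n-k)) p * (DxE C ^ k) q)) := by
          rw [map_sum]
          exact Finset.sum_congr rfl fun k _ => map_nsmul _ _ _
      _ = (∑ k ∈ Finset.range (n+1), n.choose k • ((DxE C ^ (n-k+1)) p * (DxE C ^ k) q))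
          + ∑ k ∈ Finset.range (n+1), n.choose k • ((DxE C ^ (n-k)) p * (DxE C ^ (k+1)) q) := by
          rw [← Finset.sum_add_distrib]
          refine Finset.sum_congr rfl fun k _ => ?_
          rw [← smul_add]
          congr 1
          show pderiv 0 (_ * _) = _
          rw [pderiv_mul, pow_succ' (DxE C) (n-k), pow_succ' (DxE C) k,
            Module.End.mul_apply, Module.End.mul_apply]
          rfl
      _ = (∑ k ∈ Finset.range (n+1), n.choose (k+1) • ((DxE C ^ (n-k)) p * (DxE C ^ (k+1)) q))
            + 1 • ((DxE C ^ (n+1)) p * (DxE C ^ 0) q)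
            + ∑ k ∈ Finset.range (n+1), n.choose k • ((DxE C ^ (n-k)) p * (DxE C ^ (k+1)) q) := ?_
      _ = ((∑ k ∈ Finset.range (n+1), n.choose k • ((DxE C ^ (n-k)) p * (DxE C ^ (k+1)) q))
            + ∑ k ∈ Finset.range (n+1), n.choose (k+1) • ((DxE C ^ (n-k)) p * (DxE C ^ (k+1)) q))
            + 1 • ((DxE C ^ (n+1)) p * (DxE C ^ 0) q) := by
          rw [add_comm, add_assoc]
      _ = (∑ i ∈ Finset.range (n+1),
              (n+1).choose (i+1) • ((DxE C ^ (n+1-(i+1))) p * (DxE C ^ (i+1)) q))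
            + 1 • ((DxE C ^ (n+1)) p * (DxE C ^ 0) q) := by
          simp_rw [Nat.choose_succ_succ, Nat.succ_sub_succ, add_smul, Finset.sum_add_distrib]
      _ = ∑ k ∈ Finset.range (n+2), (n+1).choose k • ((DxE C ^ (n+1-k)) p * (DxE C ^ k) q) := by
          rw [Finset.sum_range_succ' _ (n+1), Nat.choose_zero_right, Nat.sub_zero, one_smul]
    congr 1
    refine (Finset.sum_range_succ' _ _).trans (congrArg₂ (· + ·) ?_ ?_)
    · rw [Finset.sum_range_succ, Nat.choose_succ_self, zero_smul, add_zero]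
      refine Finset.sum_congr rfl fun k hk => ?_
      rw [Finset.mem_range] at hk
      have hx : n - (k+1) + 1 = n - k := by omega
      rw [hx]
    · rw [Nat.choose_zero_right, Nat.sub_zero]

noncomputable def compList (S T : ℕ) (aa : ℕ → MvPolynomial (Fin 2) C) :
    (ℕ → MvPolynomial (Fin 2) C) →ₗ[C] (ℕ → MvPolynomial (Fin 2) C) where
  toFun b u := ∑ j ∈ Finset.range (S+1), ∑ i ∈ Finset.range (T+1), ∑ k ∈ Finset.range (j+1),
      if k + i = u then j.choose k • (b j * (DxE C ^ (j-k)) (aa i)) else 0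
  map_add' b b' := by
    funext u
    simp only [Pi.add_apply, ← Finset.sum_add_distrib]
    refine Finset.sum_congr rfl fun j _ => Finset.sum_congr rfl fun i _ =>
      Finset.sum_congr rfl fun k _ => ?_
    split
    · rw [add_mul, smul_add]
    · rw [add_zero]
  map_smul' c b := by
    funext u
    simp only [RingHom.id_apply, Pi.smul_apply, Finset.smul_sum]
    refine Finset.sum_congr rfl fun j _ => Finset.sum_congr rfl fun i _ =>
      Finset.sum_congr rfl fun k _ => ?_
    split
    · rw [smul_mul_assoc, smul_comm]
    · rw [smul_zero]

lemma compList_apply (S T : ℕ) (aa b : ℕ → MvPolynomial (Fin 2) C) (u : ℕ) :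
    compList S T aa b u
      = ∑ j ∈ Finset.range (S+1), ∑ i ∈ Finset.range (T+1), ∑ k ∈ Finset.range (j+1),
          if k + i = u then j.choose k • (b j * (DxE C ^ (j-k)) (aa i)) else 0 := rfl

lemma op_comp (S T : ℕ) (aa b : ℕ → MvPolynomial (Fin 2) C) :
    (∑ u ∈ Finset.range (S + T + 1),
        LinearMap.mulLeft C (compList S T aa b u) ∘ₗ DxE C ^ u)
      = (∑ j ∈ Finset.range (S + 1), LinearMap.mulLeft C (b j) ∘ₗ DxE C ^ j) ∘ₗ
        (∑ i ∈ Finset.range (T + 1), LinearMap.mulLeft C (aa i) ∘ₗ DxE C ^ i) := by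
  apply LinearMap.ext
  intro q
  simp only [LinearMap.sum_apply, LinearMap.comp_apply, LinearMap.mulLeft_apply,
    compList_apply]
  have hR : ∀ j, (DxE C ^ j) (∑ i ∈ Finset.range (T+1), aa i * (DxE C ^ i) q)
      = ∑ i ∈ Finset.range (T+1), ∑ k ∈ Finset.range (j+1),
          j.choose k • ((DxE C ^ (j-k)) (aa i) * (DxE C ^ (k+i)) q) := by
    intro j
    rw [map_sum]
    refine Finset.sum_congr rfl fun i _ => ?_
    rw [pow_pderiv_mul]
    refine Finset.sum_congr rfl fun k _ => ?_
    congr 2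
    rw [← Module.End.mul_apply, ← pow_add]
  simp only [hR, Finset.mul_sum, Finset.sum_mul]
  rw [Finset.sum_comm]
  refine Finset.sum_congr rfl fun j hj => ?_
  rw [Finset.sum_comm]
  refine Finset.sum_congr rfl fun i hi => ?_
  rw [Finset.sum_comm]
  refine Finset.sum_congr rfl fun k hk => ?_
  rw [Finset.mem_range] at hj hi hk
  simp only [ite_mul, zero_mul]
  rw [Finset.sum_ite_eq, if_pos (Finset.mem_range.mpr (by omega))]
  rw [smul_mul_assoc, mul_assoc, mul_smul_comm]

lemma compList_eq_zero_of_gt (S T u : ℕ) (aa b : ℕ → MvPolynomial (Fin 2) C)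
    (hu : S + T < u) : compList S T aa b u = 0 := by
  rw [compList_apply]
  refine Finset.sum_eq_zero fun j hj => Finset.sum_eq_zero fun i hi =>
    Finset.sum_eq_zero fun k hk => ?_
  rw [Finset.mem_range] at hj hi hk
  exact if_neg (by omega)

lemma compList_degreeOf_le (v : Fin 2) (S T Da Db : ℕ) (aa b : ℕ → MvPolynomial (Fin 2) C)
    (ha : ∀ i ≤ T, degreeOf v (aa i) ≤ Da) (hb : ∀ j, degreeOf v (b j) ≤ Db) (u : ℕ) :
    degreeOf v (compList S T aa b u) ≤ Db + Da := by
  rw [compList_apply]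
  refine le_trans (degreeOf_sum_le _ _ _) (Finset.sup_le fun j hj => ?_)
  refine le_trans (degreeOf_sum_le _ _ _) (Finset.sup_le fun i hi => ?_)
  refine le_trans (degreeOf_sum_le _ _ _) (Finset.sup_le fun k hk => ?_)
  split
  · rw [← Nat.cast_smul_eq_nsmul C, smul_eq_C_mul]
    refine le_trans (degreeOf_mul_le _ _ _) ?_
    rw [degreeOf_C, zero_add]
    refine le_trans (degreeOf_mul_le _ _ _) ?_
    have h1 : degreeOf v ((DxE C ^ (j-k)) (aa i)) ≤ Da := by
      refine le_trans (degreeOf_pow_pderiv_le v 0 (j-k) (aa i)) ?_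
      exact ha i (by rw [Finset.mem_range] at hi; omega)
    exact add_le_add (hb j) h1
  · simp

lemma compList_leading (S T s t : ℕ) (aa b : ℕ → MvPolynomial (Fin 2) C)
    (hs : s ≤ S) (ht : t ≤ T)
    (hb : ∀ j, s < j → b j = 0) (ha : ∀ i, t < i → i ≤ T → aa i = 0) :
    compList S T aa b (s + t) = b s * aa t := by
  rw [compList_apply]
  rw [Finset.sum_eq_single s]
  · rw [Finset.sum_eq_single t]
    · rw [Finset.sum_eq_single s]
      · rw [if_pos rfl, Nat.choose_self, one_smul, Nat.sub_self, pow_zero,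
          Module.End.one_apply]
      · intro k hk hkne
        rw [Finset.mem_range] at hk
        exact if_neg (by omega)
      · intro habs
        exact absurd (Finset.mem_range.mpr (by omega)) habs
    · intro i hi hine
      rw [Finset.mem_range] at hi
      refine Finset.sum_eq_zero fun k hk => ?_
      rw [Finset.mem_range] at hk
      split
      · rename_i hceq
        by_cases hit : t < i
        · rw [ha i hit (by omega), map_zero, mul_zero, smul_zero]
        · exact absurd hceq (by omega)
      · rfl
    · intro habs
      exact absurd (Finset.mem_range.mpr (by omega)) habs
  · intro j hj hjne
    rw [Finset.mem_range] at hj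
    refine Finset.sum_eq_zero fun i hi => Finset.sum_eq_zero fun k hk => ?_
    rw [Finset.mem_range] at hi hk
    split
    · rename_i hceq
      by_cases hbj : s < j
      · rw [hb j hbj, zero_mul, smul_zero]
      · have hit : t < i := by omega
        rw [ha i hit (by omega), map_zero, mul_zero, smul_zero]
    · rfl
  · intro habs
    exact absurd (Finset.mem_range.mpr (by omega)) habs

lemma exists_max_idx {α : Type*} [Zero α] (S : ℕ) (b : ℕ → α) (j₀ : ℕ)
    (hj : j₀ ≤ S) (hb : b j₀ ≠ 0) :
    ∃ s, s ≤ S ∧ b s ≠ 0 ∧ ∀ j, s < j → j ≤ S → b j = 0 := by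
  induction S with
  | zero =>
    have hj0 : j₀ = 0 := by omega
    rw [hj0] at hb
    exact ⟨0, le_refl 0, hb, fun j h1 h2 => by omega⟩
  | succ S IH =>
    by_cases hS : b (S+1) ≠ 0
    · exact ⟨S+1, le_refl _, hS, fun j h1 h2 => by omega⟩
    · push_neg at hS
      by_cases hj0 : j₀ ≤ S
      · obtain ⟨s, h1, h2, h3⟩ := IH hj0
        refine ⟨s, by omega, h2, fun j ha hb' => ?_⟩
        by_cases hjS : j ≤ S
        · exact h3 j ha hjS
        · have hje : j = S+1 := by omega
          rw [hje]
          exact hS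
      · have hje : j₀ = S+1 := by omega
        rw [hje] at hb
        exact absurd hS hb

lemma comp_Phi_injective (S T D H : ℕ) (aa : ℕ → MvPolynomial (Fin 2) C)
    (hnz : ∃ i, i ≤ T ∧ aa i ≠ 0) :
    Function.Injective ((compList S T aa).comp (Phi (C := C) S D H)) := by
  classical
  rw [injective_iff_map_eq_zero]
  intro f hf
  by_contra hfne
  set b := Phi (C := C) S D H f with hbdef
  have hchar := (mem_range_Phi (C := C) b).mp ⟨f, rfl⟩
  have hbne : ∃ j, b j ≠ 0 := by
    by_contra hall
    push_neg at hall
    refine hfne (Phi_injective S D H ?_)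
    rw [map_zero, ← hbdef]
    funext k
    exact hall k
  obtain ⟨j₀, hj₀⟩ := hbne
  have hj₀S : j₀ ≤ S := by
    by_contra hgt
    exact hj₀ (hchar.1 j₀ (by omega))
  obtain ⟨i₀, hi₀T, hi₀⟩ := hnz
  obtain ⟨s, hsS, hbs, hbz'⟩ := exists_max_idx S b j₀ hj₀S hj₀
  obtain ⟨t, htT, hat, haz⟩ := exists_max_idx T aa i₀ hi₀T hi₀
  have hbz : ∀ j, s < j → b j = 0 := by
    intro j hsj
    by_cases hjS : j ≤ S
    · exact hbz' j hsj hjS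
    · exact hchar.1 j (by omega)
  have hlead := compList_leading S T s t aa b hsS htT hbz haz
  have : compList S T aa b (s + t) = 0 := by
    have : compList S T aa b = 0 := hf
    rw [this]; rfl
  rw [hlead] at this
  exact (mul_ne_zero hbs hat) this

lemma finrank_counting {K V : Type*} [Field K] [AddCommGroup V] [Module K V]
    (Vm : Submodule K V) [FiniteDimensional K Vm] {ι : Type*} [DecidableEq ι] (s : Finset ι)
    (W : ι → Submodule K V) (hW : ∀ i, W i ≤ Vm) [∀ i, FiniteDimensional K (W i)] :
    Module.finrank K Vm ≤ Module.finrank K ↥(Vm ⊓ s.inf W)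
      + ∑ i ∈ s, (Module.finrank K Vm - Module.finrank K (W i)) := by
  classical
  induction s using Finset.cons_induction with
  | empty => rw [Finset.inf_empty, inf_top_eq, Finset.sum_empty, add_zero]
  | cons a s ha IH =>
    rw [Finset.inf_cons, Finset.sum_cons]
    have hBle : Vm ⊓ s.inf W ≤ Vm := inf_le_left
    haveI : FiniteDimensional K ↥(Vm ⊓ s.inf W) := Submodule.finiteDimensional_of_le hBle
    have hle1 : Vm ⊓ (W a ⊓ s.inf W) = W a ⊓ (Vm ⊓ s.inf W) := by
      rw [← inf_assoc, inf_comm Vm (W a), inf_assoc]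
    have hsum := Submodule.finrank_sup_add_finrank_inf_eq (W a) (Vm ⊓ s.inf W)
    have hsup : W a ⊔ (Vm ⊓ s.inf W) ≤ Vm := sup_le (hW a) hBle
    have h2 : Module.finrank K ↥(W a ⊔ (Vm ⊓ s.inf W)) ≤ Module.finrank K Vm :=
      Submodule.finrank_mono hsup
    have h3 : Module.finrank K ↥(W a) ≤ Module.finrank K Vm :=
      Submodule.finrank_mono (hW a)
    rw [hle1]
    omega

end CLMaux


open CLMaux

/-- Order–degree–height surface for common left multiples of differential operators
with coefficients in `C[x,y]` (Theorem 1 of the paper, differential case).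
If `(r,d,h)` satisfies the stated polynomial inequality, then the operators
`L_ℓ = Σ_i (a_{ℓ,i}·)∘D_x^i` (of order `r_ℓ`, degree `≤ d_ℓ`, height `≤ h_ℓ`) have a
nonzero common left multiple of order at most `r`, degree at most `d`, and height at
most `h`, with multipliers of the expected shape. -/
theorem common_left_multiple_order_degree_height_differential
    (C : Type*) [Field C] [CharZero C] (n : ℕ)
    (rr dd hh : Fin n → ℕ)
    (a : Fin n → ℕ → MvPolynomial (Fin 2) C)
    (hnz : ∀ ℓ, ∃ i ≤ rr ℓ, a ℓ i ≠ 0)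
    (hd : ∀ ℓ, ∀ i ≤ rr ℓ, degreeOf 0 (a ℓ i) ≤ dd ℓ)
    (hh' : ∀ ℓ, ∀ i ≤ rr ℓ, degreeOf 1 (a ℓ i) ≤ hh ℓ)
    (r d h : ℕ)
    (hr : ∀ ℓ, rr ℓ ≤ r) (hdle : ∀ ℓ, dd ℓ ≤ d) (hhle : ∀ ℓ, hh ℓ ≤ h)
    (hineq :
      ((r : ℤ) + 1) * ((d : ℤ) + 1) * ((h : ℤ) + 1)
        - ((r : ℤ) + 1) * ((d : ℤ) + 1) * (∑ ℓ, (hh ℓ : ℤ))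
        - ((r : ℤ) + 1) * ((h : ℤ) + 1) * (∑ ℓ, (dd ℓ : ℤ))
        - ((d : ℤ) + 1) * ((h : ℤ) + 1) * (∑ ℓ, (rr ℓ : ℤ))
        + ((r : ℤ) + 1) * (∑ ℓ, (dd ℓ : ℤ) * (hh ℓ : ℤ))
        + ((d : ℤ) + 1) * (∑ ℓ, (rr ℓ : ℤ) * (hh ℓ : ℤ))
        + ((h : ℤ) + 1) * (∑ ℓ, (rr ℓ : ℤ) * (dd ℓ : ℤ))
        - (∑ ℓ, (rr ℓ : ℤ) * (dd ℓ : ℤ) * (hh ℓ : ℤ)) > 0) :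
    ∃ (c : ℕ → MvPolynomial (Fin 2) C) (mm : Fin n → ℕ → MvPolynomial (Fin 2) C),
      (¬ ∀ i ≤ r, c i = 0) ∧
      (∀ i ≤ r, degreeOf 0 (c i) ≤ d ∧ degreeOf 1 (c i) ≤ h) ∧
      (∀ ℓ, ∀ j ≤ r - rr ℓ,
        degreeOf 0 (mm ℓ j) ≤ d - dd ℓ ∧ degreeOf 1 (mm ℓ j) ≤ h - hh ℓ) ∧
      (∀ ℓ,
        (∑ i ∈ Finset.range (r + 1),
            (LinearMap.mulLeft C (c i)) ∘ₗ
              (((pderiv (0 : Fin 2)).toLinearMap :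
                  Module.End C (MvPolynomial (Fin 2) C)) ^ i)) =
        (∑ j ∈ Finset.range (r - rr ℓ + 1),
            (LinearMap.mulLeft C (mm ℓ j)) ∘ₗ
              (((pderiv (0 : Fin 2)).toLinearMap :
                  Module.End C (MvPolynomial (Fin 2) C)) ^ j)) ∘ₗ
          (∑ i ∈ Finset.range (rr ℓ + 1),
            (LinearMap.mulLeft C (a ℓ i)) ∘ₗ
              (((pderiv (0 : Fin 2)).toLinearMap :
                  Module.End C (MvPolynomial (Fin 2) C)) ^ i))) := by

  classical
  set Vm : Submodule C (ℕ → MvPolynomial (Fin 2) C) := LinearMap.range (Phi r d h) with hVm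
  set Psi : (ℓ : Fin n) →
      (((Fin (r - rr ℓ + 1) × Fin (d - dd ℓ + 1) × Fin (h - hh ℓ + 1)) → C) →ₗ[C]
        (ℕ → MvPolynomial (Fin 2) C)) :=
    fun ℓ => (compList (r - rr ℓ) (rr ℓ) (a ℓ)).comp (Phi (r - rr ℓ) (d - dd ℓ) (h - hh ℓ))
    with hPsi
  set W : Fin n → Submodule C (ℕ → MvPolynomial (Fin 2) C) :=
    fun ℓ => LinearMap.range (Psi ℓ) with hW
  haveI instV : FiniteDimensional C ↥Vm := by rw [hVm]; infer_instance
  haveI instW : ∀ ℓ, FiniteDimensional C ↥(W ℓ) := fun ℓ => Module.Finite.range (Psi ℓ)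
  -- each W ℓ is contained in Vm
  have hWV : ∀ ℓ, W ℓ ≤ Vm := by
    intro ℓ x hx
    simp only [hW, LinearMap.mem_range] at hx
    obtain ⟨g, rfl⟩ := hx
    have hgchar := (mem_range_Phi
      (Phi (r - rr ℓ) (d - dd ℓ) (h - hh ℓ) g)).mp ⟨g, rfl⟩
    have hPg : Psi ℓ g = compList (r - rr ℓ) (rr ℓ) (a ℓ)
        (Phi (r - rr ℓ) (d - dd ℓ) (h - hh ℓ) g) := by
      simp only [hPsi, LinearMap.comp_apply]
    rw [hVm, LinearMap.mem_range, hPg]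
    refine (mem_range_Phi _).mpr ⟨?_, ?_⟩
    · intro k hk
      refine compList_eq_zero_of_gt _ _ _ _ _ ?_
      have := hr ℓ
      omega
    · intro k
      constructor
      · refine le_trans (compList_degreeOf_le 0 (r - rr ℓ) (rr ℓ) (dd ℓ) (d - dd ℓ)
          (a ℓ) _ (hd ℓ) (fun j => (hgchar.2 j).1) k) ?_
        have := hdle ℓ
        omega
      · refine le_trans (compList_degreeOf_le 1 (r - rr ℓ) (rr ℓ) (hh ℓ) (h - hh ℓ)
          (a ℓ) _ (hh' ℓ) (fun j => (hgchar.2 j).2) k) ?_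
        have := hhle ℓ
        omega
  -- dimensions
  have hVrank : Module.finrank C ↥Vm = (r+1)*(d+1)*(h+1) := by
    rw [hVm, LinearMap.finrank_range_of_inj (Phi_injective r d h),
      Module.finrank_fintype_fun_eq_card, Fintype.card_prod, Fintype.card_prod,
      Fintype.card_fin, Fintype.card_fin, Fintype.card_fin]
    exact (mul_assoc _ _ _).symm
  have hWrank : ∀ ℓ, Module.finrank C ↥(W ℓ)
      = (r - rr ℓ + 1)*((d - dd ℓ + 1)*(h - hh ℓ + 1)) := by
    intro ℓ
    have hinj : Function.Injective (Psi ℓ) :=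
      comp_Phi_injective (r - rr ℓ) (rr ℓ) (d - dd ℓ) (h - hh ℓ) (a ℓ) (hnz ℓ)
    show Module.finrank C ↥(LinearMap.range (Psi ℓ)) = _
    rw [LinearMap.finrank_range_of_inj hinj,
      Module.finrank_fintype_fun_eq_card, Fintype.card_prod, Fintype.card_prod,
      Fintype.card_fin, Fintype.card_fin, Fintype.card_fin]
  -- the key inequality in ℕ
  have hWdN : ∀ ℓ : Fin n, (r - rr ℓ + 1)*((d - dd ℓ + 1)*(h - hh ℓ + 1))
      ≤ (r+1)*(d+1)*(h+1) := by
    intro ℓ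
    calc (r - rr ℓ + 1)*((d - dd ℓ + 1)*(h - hh ℓ + 1))
        ≤ (r+1)*((d+1)*(h+1)) :=
          Nat.mul_le_mul (by omega) (Nat.mul_le_mul (by omega) (by omega))
      _ = (r+1)*(d+1)*(h+1) := (mul_assoc _ _ _).symm
  have harith : ∑ ℓ : Fin n, ((r+1)*(d+1)*(h+1)
      - (r - rr ℓ + 1)*((d - dd ℓ + 1)*(h - hh ℓ + 1))) < (r+1)*(d+1)*(h+1) := by
    have hcast : (↑(∑ ℓ : Fin n, ((r+1)*(d+1)*(h+1)
        - (r - rr ℓ + 1)*((d - dd ℓ + 1)*(h - hh ℓ + 1)))) : ℤ)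
        = ∑ ℓ : Fin n, ((((r:ℤ)+1)*((d:ℤ)+1)*((h:ℤ)+1))
            - ((r:ℤ)+1-(rr ℓ:ℤ))*(((d:ℤ)+1-(dd ℓ:ℤ))*((h:ℤ)+1-(hh ℓ:ℤ)))) := by
      rw [Nat.cast_sum]
      refine Finset.sum_congr rfl fun ℓ _ => ?_
      have h1 := hr ℓ
      have h2 := hdle ℓ
      have h3 := hhle ℓ
      have hle := hWdN ℓ
      have e1 : ((r - rr ℓ : ℕ) : ℤ) = (r:ℤ)-(rr ℓ:ℤ) := by omega
      have e2 : ((d - dd ℓ : ℕ) : ℤ) = (d:ℤ)-(dd ℓ:ℤ) := by omega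
      have e3 : ((h - hh ℓ : ℕ) : ℤ) = (h:ℤ)-(hh ℓ:ℤ) := by omega
      rw [Nat.cast_sub hle]
      push_cast [e1, e2, e3]
      ring
    suffices hZ : (↑(∑ ℓ : Fin n, ((r+1)*(d+1)*(h+1)
        - (r - rr ℓ + 1)*((d - dd ℓ + 1)*(h - hh ℓ + 1)))) : ℤ)
        < (((r:ℤ)+1)*((d:ℤ)+1)*((h:ℤ)+1)) by
      have hNc : (((r+1)*(d+1)*(h+1) : ℕ) : ℤ) = ((r:ℤ)+1)*((d:ℤ)+1)*((h:ℤ)+1) := by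
        push_cast; ring
      rw [← hNc] at hZ
      exact_mod_cast hZ
    rw [hcast]
    have hexp : ∀ ℓ : Fin n, (((r:ℤ)+1)*((d:ℤ)+1)*((h:ℤ)+1))
        - ((r:ℤ)+1-(rr ℓ:ℤ))*(((d:ℤ)+1-(dd ℓ:ℤ))*((h:ℤ)+1-(hh ℓ:ℤ)))
        = ((r:ℤ)+1)*((d:ℤ)+1)*(hh ℓ:ℤ) + ((r:ℤ)+1)*((h:ℤ)+1)*(dd ℓ:ℤ)
          + ((d:ℤ)+1)*((h:ℤ)+1)*(rr ℓ:ℤ)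
          - ((r:ℤ)+1)*((dd ℓ:ℤ)*(hh ℓ:ℤ)) - ((d:ℤ)+1)*((rr ℓ:ℤ)*(hh ℓ:ℤ))
          - ((h:ℤ)+1)*((rr ℓ:ℤ)*(dd ℓ:ℤ)) + (rr ℓ:ℤ)*(dd ℓ:ℤ)*(hh ℓ:ℤ) := by
      intro ℓ
      ring
    rw [Finset.sum_congr rfl fun ℓ _ => hexp ℓ]
    simp only [Finset.sum_add_distrib, Finset.sum_sub_distrib, ← Finset.mul_sum]
    linarith [hineq]
  -- dimension count: the intersection is nonzero
  have hcount := finrank_counting Vm Finset.univ W hWV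
  have hsumeq : ∑ ℓ ∈ Finset.univ, (Module.finrank C ↥Vm - Module.finrank C ↥(W ℓ))
      = ∑ ℓ : Fin n, ((r+1)*(d+1)*(h+1)
          - (r - rr ℓ + 1)*((d - dd ℓ + 1)*(h - hh ℓ + 1))) := by
    refine Finset.sum_congr rfl fun ℓ _ => ?_
    rw [hVrank, hWrank ℓ]
  rw [hsumeq, hVrank] at hcount
  have hpos : 0 < Module.finrank C ↥(Vm ⊓ Finset.univ.inf W) := by omega
  haveI : FiniteDimensional C ↥(Vm ⊓ Finset.univ.inf W) :=
    Submodule.finiteDimensional_of_le inf_le_left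
  obtain ⟨v0, hv0ne⟩ := Module.finrank_pos_iff_exists_ne_zero.mp hpos
  have hvmem := v0.2
  rw [Submodule.mem_inf] at hvmem
  obtain ⟨hvV, hvInf⟩ := hvmem
  have hvne : (v0 : ℕ → MvPolynomial (Fin 2) C) ≠ 0 := by
    intro hc
    exact hv0ne (Subtype.ext hc)
  have hvV' : (v0 : ℕ → MvPolynomial (Fin 2) C) ∈ LinearMap.range (Phi (C := C) r d h) := hvV
  obtain ⟨f, hf⟩ := LinearMap.mem_range.mp hvV'
  have hchar := (mem_range_Phi (C := C) (v0 : ℕ → MvPolynomial (Fin 2) C)).mp ⟨f, hf⟩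
  have hex : ∀ ℓ, ∃ g, Psi ℓ g = (v0 : ℕ → MvPolynomial (Fin 2) C) := by
    intro ℓ
    have hmem : (v0 : ℕ → MvPolynomial (Fin 2) C) ∈ LinearMap.range (Psi ℓ) :=
      Submodule.mem_finsetInf.mp hvInf ℓ (Finset.mem_univ ℓ)
    exact LinearMap.mem_range.mp hmem
  choose g hg using hex
  refine ⟨(v0 : ℕ → MvPolynomial (Fin 2) C),
    fun ℓ => Phi (r - rr ℓ) (d - dd ℓ) (h - hh ℓ) (g ℓ), ?_, ?_, ?_, ?_⟩
  · intro hall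
    apply hvne
    funext k
    show (v0 : ℕ → MvPolynomial (Fin 2) C) k = 0
    by_cases hk : k ≤ r
    · exact hall k hk
    · exact hchar.1 k (by omega)
  · intro i _
    exact hchar.2 i
  · intro ℓ j _
    exact ((mem_range_Phi (Phi (r - rr ℓ) (d - dd ℓ) (h - hh ℓ) (g ℓ))).mp ⟨g ℓ, rfl⟩).2 j
  · intro ℓ
    have e1 : r - rr ℓ + rr ℓ = r := Nat.sub_add_cancel (hr ℓ)
    have hop := op_comp (r - rr ℓ) (rr ℓ) (a ℓ)
      (Phi (r - rr ℓ) (d - dd ℓ) (h - hh ℓ) (g ℓ))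
    rw [e1] at hop
    have hcv : compList (r - rr ℓ) (rr ℓ) (a ℓ)
        (Phi (r - rr ℓ) (d - dd ℓ) (h - hh ℓ) (g ℓ))
        = (v0 : ℕ → MvPolynomial (Fin 2) C) := by
      rw [← hg ℓ]
      simp only [hPsi, LinearMap.comp_apply]
    rw [hcv] at hop
    exact hop
end

section
/- Suppose the coefficients c_0, …, c_r ∈ C[x,y] satisfy deg_x c_i ≤ d and deg_y c_i ≤ h for all i. Then the polynomial P = Σ_{i=0}^{r} c_i · α^i · S_x^i(p) · Π_{m=1}^{M} P_{i,m} satisfies deg_x P ≤ d + θ_x + r·μ, deg_y P ≤ h + θ_y + r·ξ, and deg_k P ≤ θ_k + r·μ. Consequently, P has at most (d + θ_x + r·μ + 1)(h + θ_y + r·ξ + 1)(θ_k + r·μ + 1) nonzero monomials in x, y, k. -/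
open MvPolynomial

noncomputable section

/-- `C[x,y,k]`, realized as `MvPolynomial (Fin 3) C` with `x = X 0`, `y = X 1`, `k = X 2`. -/
abbrev P3 (C : Type*) [CommSemiring C] := MvPolynomial (Fin 3) C

/-- The embedding `C[y] → C[x,y,k]` sending the indeterminate to `y = X 1`. -/
def toY {C : Type*} [CommSemiring C] (q : Polynomial C) : P3 C :=
  Polynomial.aeval (X 1 : P3 C) q

/-- The rising factorial `q^{(n)} = q(q+1)⋯(q+n−1)`, with `q^{(0)} = 1`. -/
def risingFactorial {C : Type*} [CommSemiring C] (q : P3 C) (n : ℕ) : P3 C :=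
  ∏ j ∈ Finset.range n, (q + (j : P3 C))

/-- The shift `S_x` on `C[x,y,k]`: `x ↦ x+1`, `y ↦ y`, `k ↦ k`. -/
def SX3 (C : Type*) [CommSemiring C] : P3 C →ₐ[C] P3 C := aeval ![X 0 + 1, X 1, X 2]

/-- The shift `S_k` on `C[x,y,k]`: `x ↦ x`, `y ↦ y`, `k ↦ k+1`. -/
def SK3 (C : Type*) [CommSemiring C] : P3 C →ₐ[C] P3 C := aeval ![X 0, X 1, X 2 + 1]

/-- The fixed data of a proper hypergeometric term
`H = p α^x β^k Π_m Γ(A_m)Γ(B_m)/(Γ(U_m)Γ(V_m))`, together with a fixed order `r`. -/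
structure HyperData (C : Type*) [Field C] [CharZero C] where
  M : ℕ
  r : ℕ
  a : Fin M → ℕ
  a' : Fin M → ℕ
  b : Fin M → ℕ
  b' : Fin M → ℕ
  u : Fin M → ℕ
  u' : Fin M → ℕ
  v : Fin M → ℕ
  v' : Fin M → ℕ
  a'' : Fin M → Polynomial C
  b'' : Fin M → Polynomial C
  u'' : Fin M → Polynomial C
  v'' : Fin M → Polynomial C
  p : P3 C
  hp : p ≠ 0
  α : Polynomial C
  β : Polynomial C
  hα : α ≠ 0
  hβ : β ≠ 0

namespace HyperData

variable {C : Type*} [Field C] [CharZero C] (H : HyperData C)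

/-- `A_m = a_m x + a'_m k + a''_m`. -/
def A (m : Fin H.M) : P3 C := (H.a m : P3 C) * X 0 + (H.a' m : P3 C) * X 2 + toY (H.a'' m)

/-- `B_m = b_m x − b'_m k + b''_m`. -/
def B (m : Fin H.M) : P3 C := (H.b m : P3 C) * X 0 - (H.b' m : P3 C) * X 2 + toY (H.b'' m)

/-- `U_m = u_m x + u'_m k + u''_m`. -/
def U (m : Fin H.M) : P3 C := (H.u m : P3 C) * X 0 + (H.u' m : P3 C) * X 2 + toY (H.u'' m)

/-- `V_m = v_m x − v'_m k + v''_m`. -/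
def V (m : Fin H.M) : P3 C := (H.v m : P3 C) * X 0 - (H.v' m : P3 C) * X 2 + toY (H.v'' m)

/-- `P_{i,m} = A_m^{(i a_m)} B_m^{(i b_m)} (U_m+i u_m)^{((r−i)u_m)} (V_m+i v_m)^{((r−i)v_m)}`. -/
def Pim (i : ℕ) (m : Fin H.M) : P3 C :=
  risingFactorial (H.A m) (i * H.a m) * risingFactorial (H.B m) (i * H.b m) *
    risingFactorial (H.U m + ((i * H.u m : ℕ) : P3 C)) ((H.r - i) * H.u m) *
    risingFactorial (H.V m + ((i * H.v m : ℕ) : P3 C)) ((H.r - i) * H.v m)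

/-- `Q = β Π_m A_m^{(a'_m)} (V_m + r v_m − v'_m)^{(v'_m)}`. -/
def Q : P3 C :=
  toY H.β * ∏ m, risingFactorial (H.A m) (H.a' m) *
    risingFactorial (H.V m + ((H.r * H.v m : ℕ) : P3 C) - ((H.v' m : ℕ) : P3 C)) (H.v' m)

/-- `R = Π_m (U_m + r u_m − u'_m)^{(u'_m)} B_m^{(b'_m)}`. -/
def R : P3 C :=
  ∏ m, risingFactorial (H.U m + ((H.r * H.u m : ℕ) : P3 C) - ((H.u' m : ℕ) : P3 C)) (H.u' m) *
    risingFactorial (H.B m) (H.b' m)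

/-- `θ_x = deg_x p`. -/
def θx : ℕ := degreeOf 0 H.p

/-- `θ_y = deg_y p`. -/
def θy : ℕ := degreeOf 1 H.p

/-- `θ_k = deg_k p`. -/
def θk : ℕ := degreeOf 2 H.p

/-- `μ = max(Σ_m (a_m + b_m), Σ_m (u_m + v_m))`. -/
def μ : ℕ := max (∑ m, (H.a m + H.b m)) (∑ m, (H.u m + H.v m))

/-- `ν = max(Σ_m (a'_m + v'_m), Σ_m (u'_m + b'_m))`. -/
def ν : ℕ := max (∑ m, (H.a' m + H.v' m)) (∑ m, (H.u' m + H.b' m))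

/-- `ξ = max(deg_y α + Σ_m (a_m deg_y A_m + b_m deg_y B_m), Σ_m (u_m deg_y U_m + v_m deg_y V_m))`. -/
def ξ : ℕ :=
  max (H.α.natDegree + ∑ m, (H.a m * degreeOf 1 (H.A m) + H.b m * degreeOf 1 (H.B m)))
    (∑ m, (H.u m * degreeOf 1 (H.U m) + H.v m * degreeOf 1 (H.V m)))

/-- `η = max(deg_y β + Σ_m (a'_m deg_y A_m + v'_m deg_y V_m), Σ_m (u'_m deg_y U_m + b'_m deg_y B_m))`. -/
def η : ℕ :=
  max (H.β.natDegree + ∑ m, (H.a' m * degreeOf 1 (H.A m) + H.v' m * degreeOf 1 (H.V m)))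
    (∑ m, (H.u' m * degreeOf 1 (H.U m) + H.b' m * degreeOf 1 (H.B m)))

/-- `P = Σ_{i=0}^{r} c_i α^i S_x^i(p) Π_m P_{i,m}`. -/
def P (c : ℕ → P3 C) : P3 C :=
  ∑ i ∈ Finset.range (H.r + 1), c i * toY H.α ^ i * (⇑(SX3 C))^[i] H.p * ∏ m, H.Pim i m

end HyperData

end

/-!
Every summand `c_i α^i S_x^i(p) Π_m P_{i,m}` of `P` is a product, and `deg_j` is subadditive on
products: `S_x` does not raise degrees, a rising factorial `q^{(n)}` has degree at most
`n · deg q`, and the linear forms `A_m, B_m, U_m, V_m` have `x`- and `k`-degree at most `1`.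
So the `i`-th summand has `j`-degree at most `deg_j c_i + deg_j p + i s + (r - i) s'`, where `s`
collects the contributions of `α, A_m, B_m` and `s'` those of `U_m, V_m`; this is at most
`deg_j c_i + deg_j p + r · max s s'`. The monomial count follows because all exponent vectors of
`P` lie in the box cut out by its three partial degrees.
-/

namespace MvPolynomial

variable {R σ : Type*} [CommSemiring R]

theorem degreeOf_natCast (j : σ) (n : ℕ) : degreeOf j (n : MvPolynomial σ R) = 0 := by
  rw [← map_natCast C, degreeOf_C]

theorem degreeOf_add_natCast (j : σ) (q : MvPolynomial σ R) (n : ℕ) :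
    degreeOf j (q + (n : MvPolynomial σ R)) ≤ degreeOf j q :=
  (degreeOf_add_le _ _ _).trans (by simp [degreeOf_natCast])

theorem degreeOf_natCast_mul_le (j : σ) (n : ℕ) (q : MvPolynomial σ R) :
    degreeOf j ((n : MvPolynomial σ R) * q) ≤ degreeOf j q :=
  (degreeOf_mul_le _ _ _).trans (by simp [degreeOf_natCast])

theorem degreeOf_polynomial_aeval_le (j : σ) (f : MvPolynomial σ R) (q : Polynomial R) :
    degreeOf j (Polynomial.aeval f q) ≤ q.natDegree * degreeOf j f := by
  conv_lhs => rw [q.as_sum_support, map_sum]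
  refine (degreeOf_sum_le _ _ _).trans (Finset.sup_le fun i hi => ?_)
  rw [Polynomial.aeval_monomial, algebraMap_eq]
  calc degreeOf j (C (q.coeff i) * f ^ i) ≤ i * degreeOf j f :=
        (degreeOf_C_mul_le _ _ _).trans (degreeOf_pow_le _ _ _)
    _ ≤ q.natDegree * degreeOf j f :=
        Nat.mul_le_mul_right _ (Polynomial.le_natDegree_of_mem_supp i hi)

theorem degreeOf_aeval_le [Nontrivial R] (j : σ) (f : σ → MvPolynomial σ R)
    (hf : ∀ n, degreeOf j (f n) ≤ degreeOf j (X n : MvPolynomial σ R))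
    (q : MvPolynomial σ R) : degreeOf j (aeval f q) ≤ degreeOf j q := by
  classical
  simp only [degreeOf_X, eq_comm (a := j)] at hf
  rw [aeval_def, eval₂_eq]
  refine (degreeOf_sum_le _ _ _).trans (Finset.sup_le fun s hs => ?_)
  refine (degreeOf_mul_le _ _ _).trans ?_
  rw [algebraMap_eq, degreeOf_C, zero_add]
  calc degreeOf j (∏ n ∈ s.support, f n ^ s n)
      ≤ ∑ n ∈ s.support, s n * (if n = j then 1 else 0) :=
        (degreeOf_prod_le _ _ _).trans (Finset.sum_le_sum fun n _ =>
          (degreeOf_pow_le _ _ _).trans (Nat.mul_le_mul_left _ (hf n)))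
    _ ≤ degreeOf j q := by
        simp only [mul_ite, mul_one, mul_zero, Finset.sum_ite_eq', Finsupp.mem_support_iff]
        split_ifs
        exacts [monomial_le_degreeOf _ hs, Nat.zero_le _]

theorem card_support_le_prod_degreeOf [Fintype σ] (q : MvPolynomial σ R) :
    q.support.card ≤ ∏ i, (degreeOf i q + 1) := by
  classical
  calc q.support.card
      = (q.support.map ⟨_, DFunLike.coe_injective⟩).card := (Finset.card_map _).symm
    _ ≤ (Fintype.piFinset fun i => Finset.range (degreeOf i q + 1)).card := by
        refine Finset.card_le_card fun s hs => ?_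
        obtain ⟨t, ht, rfl⟩ := Finset.mem_map.1 hs
        simpa [Nat.lt_succ_iff] using fun i => monomial_le_degreeOf i ht
    _ = ∏ i, (degreeOf i q + 1) := by simp

theorem degreeOf_natCast_mul_X_le_one [Nontrivial R] (j i : σ) (n : ℕ) :
    degreeOf j ((n : MvPolynomial σ R) * X i) ≤ 1 := by
  classical
  refine (degreeOf_natCast_mul_le _ _ _).trans ?_
  rw [degreeOf_X]
  split_ifs <;> omega

end MvPolynomial

theorem Nat.mul_add_sub_mul_le_mul_max {i r : ℕ} (hir : i ≤ r) (x y : ℕ) :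
    i * x + (r - i) * y ≤ r * max x y :=
  calc i * x + (r - i) * y ≤ i * max x y + (r - i) * max x y := by gcongr <;> simp
    _ = r * max x y := by rw [← add_mul, Nat.add_sub_cancel' hir]

section P3Degrees

variable {C : Type*} [CommSemiring C]

theorem degreeOf_risingFactorial_le (j : Fin 3) (q : P3 C) (n : ℕ) :
    degreeOf j (risingFactorial q n) ≤ n * degreeOf j q :=
  (degreeOf_prod_le _ _ _).trans <| by
    simpa using Finset.sum_le_sum fun i (_ : i ∈ Finset.range n) => degreeOf_add_natCast j q i

theorem degreeOf_toY_of_ne {j : Fin 3} (hj : j ≠ 1) (q : Polynomial C) : degreeOf j (toY q) = 0 :=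
  Nat.le_zero.1 <| by
    simpa [toY, degreeOf_X_of_ne hj] using degreeOf_polynomial_aeval_le j (X 1 : P3 C) q

variable [Nontrivial C]

theorem degreeOf_SX3_iterate_le (j : Fin 3) (i : ℕ) (q : P3 C) :
    degreeOf j ((⇑(SX3 C))^[i] q) ≤ degreeOf j q := by
  induction i with
  | zero => rfl
  | succ i ih =>
    rw [Function.iterate_succ_apply']
    refine (degreeOf_aeval_le j _ (fun n => ?_) _).trans ih
    fin_cases n
    exacts [by simpa using degreeOf_add_natCast j (X 0 : P3 C) 1, le_rfl, le_rfl]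

theorem degreeOf_one_toY_le (q : Polynomial C) :
    degreeOf 1 (toY q) ≤ q.natDegree := by
  simpa [toY] using degreeOf_polynomial_aeval_le 1 (X 1 : P3 C) q

end P3Degrees

namespace HyperData

variable {C : Type*} [Field C] [CharZero C] (H : HyperData C)

/-- The growth of `deg_j` along the summands of `P`: the `i`-th summand pays the first entry
`i` times and the second `r - i` times. -/
noncomputable def stepDegree (j : Fin 3) : ℕ :=
  max (degreeOf j (toY H.α) + ∑ m, (H.a m * degreeOf j (H.A m) + H.b m * degreeOf j (H.B m)))
    (∑ m, (H.u m * degreeOf j (H.U m) + H.v m * degreeOf j (H.V m)))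

theorem degreeOf_Pim_le (j : Fin 3) (i : ℕ) (m : Fin H.M) :
    degreeOf j (H.Pim i m) ≤
      i * (H.a m * degreeOf j (H.A m) + H.b m * degreeOf j (H.B m)) +
        (H.r - i) * (H.u m * degreeOf j (H.U m) + H.v m * degreeOf j (H.V m)) := by
  have hA := degreeOf_risingFactorial_le j (H.A m) (i * H.a m)
  have hB := degreeOf_risingFactorial_le j (H.B m) (i * H.b m)
  have hU := (degreeOf_risingFactorial_le j _ ((H.r - i) * H.u m)).trans
    (Nat.mul_le_mul_left _ (degreeOf_add_natCast j (H.U m) (i * H.u m)))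
  have hV := (degreeOf_risingFactorial_le j _ ((H.r - i) * H.v m)).trans
    (Nat.mul_le_mul_left _ (degreeOf_add_natCast j (H.V m) (i * H.v m)))
  calc degreeOf j (H.Pim i m)
      ≤ i * H.a m * degreeOf j (H.A m) + i * H.b m * degreeOf j (H.B m) +
          (H.r - i) * H.u m * degreeOf j (H.U m) + (H.r - i) * H.v m * degreeOf j (H.V m) :=
        (degreeOf_mul_le _ _ _).trans <| add_le_add ((degreeOf_mul_le _ _ _).trans <|
          add_le_add ((degreeOf_mul_le _ _ _).trans (add_le_add hA hB)) hU) hV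
    _ = _ := by ring

theorem degreeOf_P_le (c : ℕ → P3 C) (j : Fin 3) (D : ℕ)
    (hc : ∀ i ≤ H.r, degreeOf j (c i) ≤ D) :
    degreeOf j (H.P c) ≤ D + degreeOf j H.p + H.r * H.stepDegree j := by
  refine (degreeOf_sum_le _ _ _).trans (Finset.sup_le fun i hi => ?_)
  have hir : i ≤ H.r := Nat.lt_succ_iff.1 (Finset.mem_range.1 hi)
  set e := degreeOf j (toY H.α)
  set SA := ∑ m, (H.a m * degreeOf j (H.A m) + H.b m * degreeOf j (H.B m))
  set SU := ∑ m, (H.u m * degreeOf j (H.U m) + H.v m * degreeOf j (H.V m))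
  have hprod : degreeOf j (∏ m, H.Pim i m) ≤ i * SA + (H.r - i) * SU := by
    refine (degreeOf_prod_le _ _ _).trans ((Finset.sum_le_sum fun m _ =>
      H.degreeOf_Pim_le j i m).trans_eq ?_)
    rw [Finset.sum_add_distrib, Finset.mul_sum, Finset.mul_sum]
  calc degreeOf j (c i * toY H.α ^ i * (⇑(SX3 C))^[i] H.p * ∏ m, H.Pim i m)
      ≤ D + i * e + degreeOf j H.p + (i * SA + (H.r - i) * SU) :=
        (degreeOf_mul_le _ _ _).trans <| add_le_add ((degreeOf_mul_le _ _ _).trans <|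
          add_le_add ((degreeOf_mul_le _ _ _).trans (add_le_add (hc i hir)
            (degreeOf_pow_le _ _ _))) (degreeOf_SX3_iterate_le j i H.p)) hprod
    _ = D + degreeOf j H.p + (i * (e + SA) + (H.r - i) * SU) := by ring
    _ ≤ D + degreeOf j H.p + H.r * H.stepDegree j :=
        Nat.add_le_add_left (Nat.mul_add_sub_mul_le_mul_max hir _ _) _

theorem stepDegree_le_μ {j : Fin 3} (hj : j ≠ 1) : H.stepDegree j ≤ H.μ := by
  have hX (n : ℕ) (i : Fin 3) : degreeOf j ((n : P3 C) * X i) ≤ 1 :=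
    degreeOf_natCast_mul_X_le_one j i n
  have hY (q : Polynomial C) : degreeOf j (toY q) ≤ 1 := by simp [degreeOf_toY_of_ne hj]
  have hadd {f g : P3 C} (hf : degreeOf j f ≤ 1) (hg : degreeOf j g ≤ 1) :
      degreeOf j (f + g) ≤ 1 := (degreeOf_add_le _ _ _).trans (max_le hf hg)
  have hsub {f g : P3 C} (hf : degreeOf j f ≤ 1) (hg : degreeOf j g ≤ 1) :
      degreeOf j (f - g) ≤ 1 := (degreeOf_sub_le _ _ _).trans (max_le hf hg)
  have hA m : degreeOf j (H.A m) ≤ 1 := hadd (hadd (hX _ _) (hX _ _)) (hY _)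
  have hB m : degreeOf j (H.B m) ≤ 1 := hadd (hsub (hX _ _) (hX _ _)) (hY _)
  have hU m : degreeOf j (H.U m) ≤ 1 := hadd (hadd (hX _ _) (hX _ _)) (hY _)
  have hV m : degreeOf j (H.V m) ≤ 1 := hadd (hsub (hX _ _) (hX _ _)) (hY _)
  rw [stepDegree, μ, degreeOf_toY_of_ne hj, zero_add]
  refine max_le_max (Finset.sum_le_sum fun m _ => ?_) (Finset.sum_le_sum fun m _ => ?_)
  · exact add_le_add (mul_le_of_le_one_right' (hA m)) (mul_le_of_le_one_right' (hB m))
  · exact add_le_add (mul_le_of_le_one_right' (hU m)) (mul_le_of_le_one_right' (hV m))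

theorem stepDegree_one_le_ξ : H.stepDegree 1 ≤ H.ξ :=
  max_le_max (Nat.add_le_add_right (degreeOf_one_toY_le H.α) _) le_rfl

end HyperData

open HyperData in
/-- Lemma 1 (degree bounds for `P`): if the coefficients `c_0, …, c_r ∈ C[x,y]` have
`x`-degree `≤ d` and `y`-degree `≤ h`, then
`P = Σ_i c_i α^i S_x^i(p) Π_m P_{i,m}` satisfies `deg_x P ≤ d + θ_x + rμ`,
`deg_y P ≤ h + θ_y + rξ`, `deg_k P ≤ θ_k + rμ`, and consequently `P` has at most
`(d + θ_x + rμ + 1)(h + θ_y + rξ + 1)(θ_k + rμ + 1)` nonzero monomials. -/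
theorem degree_bounds_for_P
    (C : Type*) [Field C] [CharZero C] (H : HyperData C) (d h : ℕ)
    (c : ℕ → P3 C)
    (hck : ∀ i ≤ H.r, degreeOf 2 (c i) = 0)
    (hcd : ∀ i ≤ H.r, degreeOf 0 (c i) ≤ d)
    (hch : ∀ i ≤ H.r, degreeOf 1 (c i) ≤ h) :
    degreeOf 0 (H.P c) ≤ d + H.θx + H.r * H.μ ∧
    degreeOf 1 (H.P c) ≤ h + H.θy + H.r * H.ξ ∧
    degreeOf 2 (H.P c) ≤ H.θk + H.r * H.μ ∧
    (H.P c).support.card ≤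
      (d + H.θx + H.r * H.μ + 1) * (h + H.θy + H.r * H.ξ + 1) * (H.θk + H.r * H.μ + 1) := by
  have hx : degreeOf 0 (H.P c) ≤ d + H.θx + H.r * H.μ :=
    (H.degreeOf_P_le c 0 d hcd).trans
      (Nat.add_le_add_left (Nat.mul_le_mul_left _ (H.stepDegree_le_μ (by decide))) _)
  have hy : degreeOf 1 (H.P c) ≤ h + H.θy + H.r * H.ξ :=
    (H.degreeOf_P_le c 1 h hch).trans
      (Nat.add_le_add_left (Nat.mul_le_mul_left _ H.stepDegree_one_le_ξ) _)
  have hk : degreeOf 2 (H.P c) ≤ H.θk + H.r * H.μ := by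
    simpa [θk] using (H.degreeOf_P_le c 2 0 fun i hi => (hck i hi).le).trans
      (Nat.add_le_add_left (Nat.mul_le_mul_left _ (H.stepDegree_le_μ (by decide))) _)
  refine ⟨hx, hy, hk, (card_support_le_prod_degreeOf _).trans ?_⟩
  rw [Fin.prod_univ_three]
  gcongr
end
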